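/- Let ℓ ≥ 1 be an integer and let G be a finite simple graph that contains no path on ℓ vertices as a subgraph. Let φ be a minimal H-model in G and let v ∈ V(H) with deg_H(v) ≥ 1. Then |φ(v)| < deg_H(v) · ℓ. -/

import Mathlib

/-- An `H`-model in `G`: branch sets `φ v ⊆ V(G)` inducing connected subgraphs,
pairwise disjoint, with an edge of `G` between the branch sets of adjacent vertices of `H`. -/
def IsMinorModel {V W : Type*} (G : SimpleGraph V) (H : SimpleGraph W)
    (φ : W → Set V) : Prop :=
  (∀ v : W, (G.induce (φ v)).Connected) ∧
  (∀ u v : W, H.Adj u v → ∃ u' ∈ φ u, ∃ v' ∈ φ v, G.Adj u' v') ∧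
  (∀ u v : W, u ≠ v → Disjoint (φ u) (φ v))

/-- `H` is a minor of `G` (`H ⪯ G`) if an `H`-model in `G` exists. -/
def IsMinorOf {V W : Type*} (H : SimpleGraph W) (G : SimpleGraph V) : Prop :=
  ∃ φ : W → Set V, IsMinorModel G H φ

/-- A minimal `H`-model in `G`: no `H`-model is obtained by shrinking some branch set. -/
def IsMinimalMinorModel {V W : Type*} (G : SimpleGraph V) (H : SimpleGraph W)
    (φ : W → Set V) : Prop :=
  IsMinorModel G H φ ∧
  ¬ ∃ φ' : W → Set V, IsMinorModel G H φ' ∧ (∀ v, φ' v ⊆ φ v) ∧ (∃ u, φ' u ⊂ φ u)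

/-- `G` contains `H` as a subgraph: an injective map from `V(H)` to `V(G)`
mapping edges of `H` to edges of `G`. -/
def ContainsAsSubgraph {V W : Type*} (G : SimpleGraph V) (H : SimpleGraph W) : Prop :=
  ∃ f : W → V, Function.Injective f ∧ ∀ u v : W, H.Adj u v → G.Adj (f u) (f v)

/-!
Fix an attachment point `x_u ∈ φ(v)` of every neighbour `u` of `v`, i.e. a vertex with a
`G`-neighbour in `φ(u)`. Since `G` has no `P_ℓ`, every path in `G` has fewer than `ℓ` vertices,
so joining the attachment points one by one by paths inside `G[φ(v)]` produces a connected
set `T ⊆ φ(v)` with fewer than `deg_H(v) · ℓ` vertices still touching every `φ(u)`.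
Replacing `φ(v)` by `T` gives an `H`-model, so `T = φ(v)` by minimality.
-/

open SimpleGraph

section

variable {V W : Type*} {G : SimpleGraph V} {H : SimpleGraph W}

theorem containsAsSubgraph_iff_isContained : ContainsAsSubgraph G H ↔ H ⊑ G :=
  ⟨fun ⟨f, hf, hadj⟩ => ⟨⟨⟨f, hadj _ _⟩, hf⟩⟩,
    fun ⟨c⟩ => ⟨c, c.injective, fun _ _ h => c.toHom.map_adj h⟩⟩

theorem pathGraph_isContained_pathGraph {m n : ℕ} (h : m ≤ n) : pathGraph m ⊑ pathGraph n :=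
  ⟨⟨⟨Fin.castLE h, by simp [pathGraph_adj]⟩, Fin.castLE_injective h⟩⟩

theorem SimpleGraph.Walk.IsPath.length_add_one_lt {ℓ : ℕ}
    (hG : ¬ ContainsAsSubgraph G (pathGraph ℓ)) {a b : V} {p : G.Walk a b} (hp : p.IsPath) :
    p.length + 1 < ℓ := by
  by_contra! h
  exact hG (containsAsSubgraph_iff_isContained.mpr
    ((pathGraph_isContained_pathGraph h).trans hp.isContained_pathGraph))

theorem exists_connected_subset_ncard_lt {ℓ : ℕ} (hG : ¬ ContainsAsSubgraph G (pathGraph ℓ))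
    {s : Set V} (hs : (G.induce s).Preconnected) {a b : V} (ha : a ∈ s) (hb : b ∈ s) :
    ∃ T ⊆ s, a ∈ T ∧ b ∈ T ∧ (G.induce T).Connected ∧ T.ncard < ℓ := by
  classical
  obtain ⟨p⟩ := hs ⟨a, ha⟩ ⟨b, hb⟩
  obtain ⟨w, hws⟩ : ∃ w : G.Walk a b, ∀ x ∈ w.support, x ∈ s := by
    refine ⟨p.map (Embedding.induce s).toHom, fun x hx => ?_⟩
    obtain ⟨y, -, rfl⟩ := List.mem_map.mp (Walk.support_map _ p ▸ hx)
    exact y.2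
  refine ⟨{x | x ∈ w.bypass.support}, fun x hx => hws x (w.support_bypass_subset_support hx),
    w.bypass.start_mem_support, w.bypass.end_mem_support, w.bypass.connected_induce_support, ?_⟩
  calc {x | x ∈ w.bypass.support}.ncard = w.bypass.support.toFinset.card := by
        rw [← List.coe_toFinset, Set.ncard_coe_finset]
    _ ≤ w.bypass.support.length := List.toFinset_card_le _
    _ < ℓ := by rw [Walk.length_support]; exact w.bypass_isPath.length_add_one_lt hG

theorem exists_connected_superset_ncard_lt {ℓ : ℕ}
    (hG : ¬ ContainsAsSubgraph G (pathGraph ℓ)) {s : Set V} (hs : (G.induce s).Preconnected)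
    {A : Finset V} (hA : A.Nonempty) (hAs : ↑A ⊆ s) :
    ∃ T, ↑A ⊆ T ∧ T ⊆ s ∧ (G.induce T).Connected ∧ T.ncard < A.card * ℓ := by
  induction hA using Finset.Nonempty.cons_induction with
  | singleton a =>
    have ha : a ∈ s := hAs (Finset.mem_singleton_self a)
    obtain ⟨T, hTs, haT, -, hT, hTℓ⟩ := exists_connected_subset_ncard_lt hG hs ha ha
    exact ⟨T, by simpa using haT, hTs, hT, by simpa using hTℓ⟩
  | cons a A haA hA ih =>
    rw [Finset.coe_cons, Set.insert_subset_iff] at hAs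
    obtain ⟨T, hAT, hTs, hT, hTℓ⟩ := ih hAs.2
    obtain ⟨b, hbA⟩ := hA
    obtain ⟨P, hPs, hbP, haP, hP, hPℓ⟩ :=
      exists_connected_subset_ncard_lt hG hs (hAs.2 hbA) hAs.1
    refine ⟨T ∪ P, ?_, Set.union_subset hTs hPs,
      induce_union_connected hT.preconnected hP.preconnected ⟨b, hAT hbA, hbP⟩, ?_⟩
    · rw [Finset.coe_cons, Set.insert_subset_iff]
      exact ⟨Or.inr haP, hAT.trans Set.subset_union_left⟩
    · calc (T ∪ P).ncard ≤ T.ncard + P.ncard := Set.ncard_union_le T P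
        _ < A.card * ℓ + ℓ := by omega
        _ = (Finset.cons a A haA).card * ℓ := by rw [Finset.card_cons, add_one_mul]

theorem IsMinorModel.update [DecidableEq W] {φ : W → Set V} (hφ : IsMinorModel G H φ)
    {v : W} {s : Set V} (hs : s ⊆ φ v) (hconn : (G.induce s).Connected)
    (hadj : ∀ u, H.Adj v u → ∃ x ∈ s, ∃ y ∈ φ u, G.Adj x y) :
    IsMinorModel G H (Function.update φ v s) := by
  obtain ⟨hφconn, hφadj, hφdisj⟩ := hφ
  have hsub : Function.update φ v s ≤ φ := update_le_self_iff.mpr hs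
  refine ⟨fun w => ?_, fun a b hab => ?_, fun a b hab => (hφdisj a b hab).mono (hsub a) (hsub b)⟩
  · rcases eq_or_ne w v with rfl | hw
    · rwa [Function.update_self]
    · rw [Function.update_of_ne hw]
      exact hφconn w
  · rcases eq_or_ne a v with rfl | ha
    · simpa [hab.ne.symm] using hadj b hab
    rcases eq_or_ne b v with rfl | hb
    · obtain ⟨x, hx, y, hy, hxy⟩ := hadj a hab.symm
      exact ⟨y, by simpa [ha] using hy, x, by simpa using hx, hxy.symm⟩
    · simpa [ha, hb] using hφadj a b hab

theorem IsMinimalMinorModel.eq_of_subset {φ : W → Set V} (hφ : IsMinimalMinorModel G H φ)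
    {v : W} {s : Set V} (hs : s ⊆ φ v) (hconn : (G.induce s).Connected)
    (hadj : ∀ u, H.Adj v u → ∃ x ∈ s, ∃ y ∈ φ u, G.Adj x y) : s = φ v := by
  classical
  by_contra hne
  refine hφ.2 ⟨Function.update φ v s, hφ.1.update hs hconn hadj,
    update_le_self_iff.mpr hs, v, ?_⟩
  simpa using hs.ssubset_of_ne hne

end

theorem stmt_12_general {V W : Type*}
    (ℓ : ℕ)
    (G : SimpleGraph V) (hG : ¬ ContainsAsSubgraph G (SimpleGraph.pathGraph ℓ))
    (H : SimpleGraph W) (φ : W → Set V) (hφ : IsMinimalMinorModel G H φ)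
    (v : W) (hv : 1 ≤ (H.neighborSet v).ncard) :
    (φ v).ncard < (H.neighborSet v).ncard * ℓ := by
  classical
  obtain ⟨hconn, hadj, -⟩ := hφ.1
  obtain ⟨x₀, hx₀⟩ := (hconn v).nonempty
  have hattach : ∀ u, ∃ x ∈ φ v, H.Adj v u → ∃ y ∈ φ u, G.Adj x y := by
    intro u
    by_cases h : H.Adj v u
    · obtain ⟨x, hx, hxy⟩ := hadj v u h
      exact ⟨x, hx, fun _ => hxy⟩
    · exact ⟨x₀, hx₀, fun h' => absurd h' h⟩
  choose x hxφ hxy using hattach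
  have hfin := Set.finite_of_ncard_pos hv
  set N := hfin.toFinset
  have hN : (H.neighborSet v).ncard = N.card := Set.ncard_eq_toFinset_card _ hfin
  obtain ⟨T, hAT, hTφ, hT, hTℓ⟩ := exists_connected_superset_ncard_lt hG (hconn v).preconnected
    (A := N.image x) (by rw [Finset.image_nonempty, ← Finset.card_pos, ← hN]; omega)
    (by simpa [Set.subset_def] using fun u _ => hxφ u)
  have hTeq : T = φ v := hφ.eq_of_subset hTφ hT fun u hu =>
    ⟨x u, hAT (by simpa [N] using ⟨u, hu, rfl⟩), hxy u hu⟩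
  calc (φ v).ncard = T.ncard := by rw [hTeq]
    _ < (N.image x).card * ℓ := hTℓ
    _ ≤ (H.neighborSet v).ncard * ℓ := by rw [hN]; gcongr; exact Finset.card_image_le

/-- Let `ℓ ≥ 1` and let `G` contain no path on `ℓ` vertices as a subgraph. If `φ` is a
minimal `H`-model in `G` and `v ∈ V(H)` has `deg_H(v) ≥ 1`, then `|φ(v)| < deg_H(v) · ℓ`. -/
theorem stmt_12 {V W : Type*} [Fintype V] [Fintype W]
    (ℓ : ℕ) (hℓ : 1 ≤ ℓ)
    (G : SimpleGraph V) (hG : ¬ ContainsAsSubgraph G (SimpleGraph.pathGraph ℓ))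
    (H : SimpleGraph W) (φ : W → Set V) (hφ : IsMinimalMinorModel G H φ)
    (v : W) (hv : 1 ≤ (H.neighborSet v).ncard) :
    (φ v).ncard < (H.neighborSet v).ncard * ℓ :=
  stmt_12_general ℓ G hG H φ hφ v hv
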